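/- Let θ : ℤ × ℤ → ℝ be the flow defined below and let (p_n)_{n≥1} be positive reals with p_{−n} := p_n, p_1, p_2, p_3 > 0. Then the energy of θ with respect to the conductances c(u,v) = p_{|v−u|} satisfies (1/2) ∑_{u≠v, u,v∈ℤ} θ(u,v)²/p_{|v−u|} ≤ 3/(4 p_1) + 1/(8 p_2) + 32/(3 p_2) + 32/(3 p_3) + 288 ∑_{w≥4} 1/((w−3)³ p_w). In particular, if ∑_{n≥1} 1/(n³ p_n) < ∞ then the energy of θ is finite. -/

import Mathlib

/-
θ(u, v) is nonzero only between adjacent blocks, so on an edge (u, u + w) of length w ≥ 2 it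
vanishes unless both ends lie on the same side of 0 and w < 3 min(|u|, |u + w|); there
θ² = 2^(-4|i|), with B_i the block nearer to 0, is at most (min(|u|, |u + w|) + 1)⁻⁴.
Grouping the energy by edge length, the reflection u ↦ -u - w (which preserves θ² since
θ(-u, -v) = θ(u, v) and θ is antisymmetric) reduces the squared flow on edges of length w to
twice a sum over u > w / 3 on the positive half-line, which is O(w⁻³) because
1 / (3 (x - 1/2)³) telescopes above x⁻⁴. For w = 1 the two edges at 0 add 1/4 + 1/4.
-/

/-- The index of the block of `ℤ` containing `u`, where `B_0 = {0}`,
`B_i = {2^(i-1), …, 2^i - 1}` and `B_{-i} = -B_i` for `i ≥ 1`. -/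
def blockIdx (u : ℤ) : ℤ :=
  if u = 0 then 0
  else if 0 < u then (Nat.log 2 u.toNat : ℤ) + 1
  else -((Nat.log 2 (-u).toNat : ℤ) + 1)

/-- The flow `θ` on `ℤ` from `0` to infinity: for `u ∈ B_i`, `v ∈ B_j`,
`θ(u,v) = 1/2` if `i = 0` and `j = ±1`; `θ(u,v) = 2^(-2|i|)` if `0 < i`, `j = i+1`
or `i < 0`, `j = i-1`; `θ(u,v) = 0` if `i = j` or `|i-j| ≥ 2`; and antisymmetry
`θ(u,v) = -θ(v,u)` in the remaining cases. -/
noncomputable def theta (u v : ℤ) : ℝ :=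
  let i := blockIdx u
  let j := blockIdx v
  if i = 0 ∧ (j = 1 ∨ j = -1) then 1 / 2
  else if j = 0 ∧ (i = 1 ∨ i = -1) then -(1 / 2)
  else if 0 < i ∧ j = i + 1 then (2 : ℝ) ^ (-(2 * i))
  else if i < 0 ∧ j = i - 1 then (2 : ℝ) ^ (2 * i)
  else if 0 < j ∧ i = j + 1 then -((2 : ℝ) ^ (-(2 * j)))
  else if j < 0 ∧ i = j - 1 then -((2 : ℝ) ^ (2 * j))
  else 0

open Finset
open scoped ENNReal

lemma blockIdx_neg (u : ℤ) : blockIdx (-u) = -blockIdx u := by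
  unfold blockIdx
  split_ifs <;> first | rfl | omega | simp

lemma blockIdx_natCast (n : ℕ) : blockIdx n = if n = 0 then 0 else Nat.log 2 n + 1 := by
  by_cases hn : n = 0 <;> simp [blockIdx, hn, Nat.pos_of_ne_zero]

lemma theta_neg_neg (u v : ℤ) : theta (-u) (-v) = theta u v := by
  simp only [theta, blockIdx_neg]
  generalize blockIdx u = i, blockIdx v = j
  split_ifs <;> first | rfl | (exfalso; omega) | simp

lemma theta_antisymm (u v : ℤ) : theta v u = -theta u v := by
  simp only [theta]
  generalize blockIdx u = i, blockIdx v = j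
  split_ifs <;> first | (exfalso; omega) | simp

lemma theta_eq_zero_of_two_le_abs {u v : ℤ} (h : 2 ≤ |blockIdx u - blockIdx v|) :
    theta u v = 0 := by
  simp only [theta]
  generalize blockIdx u = i, blockIdx v = j at h
  rw [le_abs'] at h
  split_ifs <;> first | rfl | (exfalso; omega)

lemma theta_zero_one : theta 0 1 = 1 / 2 := by
  simp [theta, blockIdx]

lemma theta_neg_one_zero : theta (-1) 0 = -(1 / 2) := by
  simp [theta, blockIdx]

lemma theta_natCast_of_le {m n : ℕ} (hm : m ≠ 0) (hmn : m ≤ n) :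
    theta m n = if Nat.log 2 n = Nat.log 2 m + 1 then 1 / ((2 : ℝ) ^ (Nat.log 2 m + 1)) ^ 2
      else 0 := by
  have hlog : Nat.log 2 m ≤ Nat.log 2 n := Nat.log_mono_right hmn
  simp only [theta, blockIdx_natCast, if_neg hm, if_neg (show n ≠ 0 by omega)]
  split_ifs <;> first
    | (exfalso; omega)
    | rfl
    | (rw [zpow_neg, one_div, ← pow_mul, mul_comm]; norm_cast)

lemma theta_natCast_sq_le {m n : ℕ} (hm : m ≠ 0) (hmn : m ≤ n) :
    theta m n ^ 2 ≤ 1 / ((m : ℝ) + 1) ^ 4 := by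
  rw [theta_natCast_of_le hm hmn]
  split_ifs
  · have hm2 : (m : ℝ) + 1 ≤ 2 ^ (Nat.log 2 m + 1) := by
      exact_mod_cast Nat.lt_pow_succ_log_self one_lt_two m
    rw [div_pow, one_pow, ← pow_mul]
    gcongr
  · rw [zero_pow two_ne_zero]
    positivity

lemma theta_natCast_eq_zero_of_four_mul_le {m n : ℕ} (hm : m ≠ 0) (h : 4 * m ≤ n) :
    theta m n = 0 := by
  have hlog : Nat.log 2 m + 2 ≤ Nat.log 2 n := by
    refine Nat.le_log_of_pow_le one_lt_two ?_
    have := Nat.pow_log_le_self 2 hm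
    rw [pow_add]
    omega
  rw [theta_natCast_of_le hm (by omega), if_neg (by omega)]

lemma theta_eq_zero_of_nonpos_of_nonneg {u v : ℤ} (hu : u ≤ 0) (hv : 0 ≤ v) (huv : u + 2 ≤ v) :
    theta u v = 0 := by
  apply theta_eq_zero_of_two_le_abs
  lift v to ℕ using hv
  obtain ⟨m, rfl⟩ : ∃ m : ℕ, u = -m := ⟨u.natAbs, by omega⟩
  rw [blockIdx_neg, blockIdx_natCast, blockIdx_natCast]
  have hlog (k : ℕ) (hk : 2 ≤ k) : 1 ≤ Nat.log 2 k := Nat.le_log_of_pow_le one_lt_two hk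
  have hv := hlog v
  have hm := hlog m
  rw [le_abs']
  split_ifs <;> omega

lemma one_div_pow_four_le_sub (x : ℝ) (hx : 1 ≤ x) :
    1 / x ^ 4 ≤ 1 / (3 * (x - 1 / 2) ^ 3) - 1 / (3 * (x + 1 / 2) ^ 3) := by
  have h1 : 0 < x - 1 / 2 := by linarith
  rw [div_sub_div _ _ (by positivity) (by positivity),
    div_le_div_iff₀ (by positivity) (by positivity)]
  nlinarith [sq_nonneg (x ^ 2 - 9 / 80), sq_nonneg x, mul_pos h1 h1, sq_nonneg (x - 1)]

lemma tsum_ofReal_one_div_add_pow_four_le (a : ℝ) (ha : 1 ≤ a) :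
    ∑' n : ℕ, ENNReal.ofReal (1 / (n + a) ^ 4) ≤ ENNReal.ofReal (1 / (3 * (a - 1 / 2) ^ 3)) := by
  set g : ℕ → ℝ := fun n => 1 / (3 * (n + a - 1 / 2) ^ 3)
  have hstep (n : ℕ) : 1 / (n + a) ^ 4 ≤ g n - g (n + 1) := by
    have := one_div_pow_four_le_sub (n + a) (by linarith [n.cast_nonneg (α := ℝ)])
    simp only [g]; push_cast
    convert this using 4; ring
  refine ENNReal.tsum_le_of_sum_range_le fun N => ?_
  rw [← ENNReal.ofReal_sum_of_nonneg fun n _ => by positivity]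
  refine ENNReal.ofReal_le_ofReal ?_
  calc ∑ n ∈ range N, 1 / (n + a) ^ 4 ≤ ∑ n ∈ range N, (g n - g (n + 1)) :=
        sum_le_sum fun n _ => hstep n
    _ = g 0 - g N := sum_range_sub' g N
    _ ≤ g 0 := sub_le_self _ <| one_div_nonneg.2 <| mul_nonneg zero_le_three <|
        pow_nonneg (by linarith [N.cast_nonneg (α := ℝ)]) 3
    _ = 1 / (3 * (a - 1 / 2) ^ 3) := by simp [g]

/-- `ℤ = {u ≤ -W - 1} ∪ {-W, …, 0} ∪ {u ≥ 1}`, and `u ↦ -u - W` swaps the two outer parts. -/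
lemma ENNReal.tsum_int_eq_of_reflect {f : ℤ → ℝ≥0∞} (W : ℕ) (hf : ∀ u, f (-u - W) = f u) :
    ∑' u, f u = ∑ i ∈ range (W + 1), f (i - W) + 2 * ∑' n : ℕ, f (n + 1) := by
  have hneg : ∑' n : ℕ, f (-(n + 1)) = ∑ i ∈ range W, f (i + 1 - W) + ∑' n : ℕ, f (n + 1) := by
    rw [← ENNReal.summable.sum_add_tsum_nat_add' (k := W)]
    congr 1
    · refine sum_congr rfl fun i _ => ?_
      rw [← hf (i + 1 - W)]
      ring_nf
    · refine tsum_congr fun n => ?_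
      rw [← hf (n + 1)]
      push_cast
      ring_nf
  rw [tsum_of_add_one_of_neg_add_one ENNReal.summable ENNReal.summable, hneg, sum_range_succ',
    two_mul, Nat.cast_zero, zero_sub, ← hf 0, neg_zero, zero_sub]
  push_cast
  ring

lemma ENNReal.tsum_prod_eq_tsum_tsum_add (F : ℤ × ℤ → ℝ≥0∞) :
    ∑' uv, F uv = ∑' w, ∑' u, F (u, u + w) := by
  rw [ENNReal.tsum_comm, ENNReal.tsum_prod']
  exact tsum_congr fun u => ((Equiv.addLeft u).tsum_eq fun v => F (u, v)).symm

noncomputable def thetaSqSum (w : ℤ) : ℝ≥0∞ := ∑' u : ℤ, ENNReal.ofReal (theta u (u + w) ^ 2)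

lemma thetaSqSum_eq (W : ℕ) :
    thetaSqSum W = ∑ i ∈ range (W + 1), ENNReal.ofReal (theta (i - W) i ^ 2)
      + 2 * ∑' n : ℕ, ENNReal.ofReal (theta (n + 1) (n + 1 + W) ^ 2) := by
  rw [thetaSqSum, ENNReal.tsum_int_eq_of_reflect W fun u => ?_]
  · simp only [sub_add_cancel]
  · rw [show -u - W + W = -u by ring, ← theta_neg_neg, theta_antisymm, neg_sq]
    ring_nf

lemma ofReal_theta_sq_add_le (n W : ℕ) :
    ENNReal.ofReal (theta (n + 1) (n + 1 + W) ^ 2) ≤ ENNReal.ofReal (1 / (n + 2) ^ 4) := by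
  have h := theta_natCast_sq_le (m := n + 1) (n := n + 1 + W) (by omega) (by omega)
  push_cast at h
  exact ENNReal.ofReal_le_ofReal (h.trans_eq (by ring))

lemma tsum_ofReal_theta_sq_le {W k : ℕ} (hk : 3 * k ≤ W) :
    ∑' n : ℕ, ENNReal.ofReal (theta (n + 1) (n + 1 + W) ^ 2)
      ≤ ENNReal.ofReal (1 / (3 * (k + 3 / 2) ^ 3)) := by
  rw [← ENNReal.summable.sum_add_tsum_nat_add' (k := k), sum_eq_zero fun i hi => ?_, zero_add]
  · calc _ ≤ ∑' n : ℕ, ENNReal.ofReal (1 / (n + (k + 2 : ℝ)) ^ 4) :=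
          ENNReal.tsum_le_tsum fun n =>
            (ofReal_theta_sq_add_le (n + k) W).trans_eq (by push_cast; ring_nf)
      _ ≤ ENNReal.ofReal (1 / (3 * ((k + 2 : ℝ) - 1 / 2) ^ 3)) :=
          tsum_ofReal_one_div_add_pow_four_le _ (by linarith [k.cast_nonneg (α := ℝ)])
      _ = _ := by ring_nf
  · rw [mem_range] at hi
    have h := theta_natCast_eq_zero_of_four_mul_le (m := i + 1) (n := i + 1 + W) (by omega)
      (by omega)
    push_cast at h
    simp [h]

lemma thetaSqSum_one_le : thetaSqSum 1 ≤ ENNReal.ofReal (3 / 4) := by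
  have hpos := tsum_ofReal_theta_sq_le (W := 1) (k := 0) zero_le_one
  have h := thetaSqSum_eq 1
  norm_num [sum_range_succ, theta_neg_one_zero, theta_zero_one] at h hpos
  calc thetaSqSum 1
      ≤ ENNReal.ofReal (1 / 4) + ENNReal.ofReal (1 / 4) + 2 * ENNReal.ofReal (8 / 81) := by
        rw [h]; gcongr
    _ ≤ ENNReal.ofReal (3 / 4) := by
        rw [← ENNReal.ofReal_ofNat 2, ← ENNReal.ofReal_mul zero_le_two,
          ← ENNReal.ofReal_add (by norm_num) (by norm_num),
          ← ENNReal.ofReal_add (by norm_num) (by norm_num)]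
        exact ENNReal.ofReal_le_ofReal (by norm_num)

lemma thetaSqSum_le {W : ℕ} (hW : 2 ≤ W) : thetaSqSum W ≤ ENNReal.ofReal (18 / (W + 1) ^ 3) := by
  set k := W / 3
  have hmid : ∑ i ∈ range (W + 1), ENNReal.ofReal (theta (i - W) i ^ 2) = 0 :=
    sum_eq_zero fun i hi => by
      rw [mem_range] at hi
      rw [theta_eq_zero_of_nonpos_of_nonneg (by omega) (by positivity) (by omega)]
      simp
  have hWk : (W : ℝ) + 1 ≤ 3 * (k + 3 / 2) := by
    have : (W : ℝ) ≤ 3 * k + 2 := by exact_mod_cast (show W ≤ 3 * k + 2 by omega)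
    linarith
  rw [thetaSqSum_eq, hmid, zero_add]
  calc _ ≤ 2 * ENNReal.ofReal (1 / (3 * (k + 3 / 2) ^ 3)) := by
        gcongr
        exact tsum_ofReal_theta_sq_le (Nat.mul_div_le W 3)
    _ = ENNReal.ofReal (18 / (3 * (k + 3 / 2)) ^ 3) := by
        rw [← ENNReal.ofReal_ofNat 2, ← ENNReal.ofReal_mul zero_le_two]
        congr 1
        field_simp
        ring
    _ ≤ ENNReal.ofReal (18 / (W + 1) ^ 3) := by gcongr

noncomputable def thetaEnergy (p : ℕ → ℝ) : ℝ≥0∞ :=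
  ∑' uv : ℤ × ℤ,
    if uv.1 ≠ uv.2 then ENNReal.ofReal (theta uv.1 uv.2 ^ 2 / p (uv.2 - uv.1).natAbs) else 0

lemma thetaEnergy_eq (p : ℕ → ℝ) :
    thetaEnergy p = 2 * ∑' n : ℕ, thetaSqSum (n + 1) * ENNReal.ofReal (p (n + 1))⁻¹ := by
  -- edges of length `w` and `-w` carry the same energy
  rw [thetaEnergy, ENNReal.tsum_prod_eq_tsum_tsum_add,
    ENNReal.tsum_int_eq_of_reflect 0 fun w => ?_]
  · simp only [range_one, sum_singleton, Nat.cast_zero, sub_zero, add_zero, ne_eq, not_true,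
      if_false, tsum_zero, zero_add, add_sub_cancel_left, thetaSqSum, ← ENNReal.tsum_mul_right]
    congr 1
    refine tsum_congr fun n => tsum_congr fun u => ?_
    rw [if_pos (by omega), div_eq_mul_inv, ENNReal.ofReal_mul (sq_nonneg _)]
    norm_cast
  · rw [← (Equiv.addRight w).tsum_eq]
    refine tsum_congr fun u => ?_
    simp only [Equiv.coe_addRight, Nat.cast_zero, sub_zero]
    rw [show u + w + -w = u by ring, theta_antisymm, neg_sq, ← Int.natAbs_neg]
    simp only [ne_comm, neg_sub, add_sub_cancel_left]

lemma mul_ofReal_inv_le_of_le {T : ℝ≥0∞} {c : ℝ} (hc : 0 ≤ c) (hT : T ≤ ENNReal.ofReal c) (x : ℝ) :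
    T * ENNReal.ofReal x⁻¹ ≤ ENNReal.ofReal (c / x) := by
  rw [div_eq_mul_inv, ENNReal.ofReal_mul hc]
  gcongr

lemma tsum_thetaSqSum_mul_le (p : ℕ → ℝ) (hp : ∀ n : ℕ, 1 ≤ n → 0 < p n) :
    ∑' n : ℕ, thetaSqSum (n + 1) * ENNReal.ofReal (p (n + 1))⁻¹
      ≤ ENNReal.ofReal (3 / (4 * p 1) + 1 / (8 * p 2) + 32 / (3 * p 2) + 32 / (3 * p 3))
        + 288 * ∑' n : ℕ, ENNReal.ofReal (1 / ((n + 1) ^ 3 * p (n + 4))) := by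
  have hp1 := hp 1 le_rfl
  have hp2 := hp 2 one_le_two
  have hp3 := hp 3 (by norm_num)
  rw [← ENNReal.summable.sum_add_tsum_nat_add' (k := 3)]
  simp only [sum_range_succ, sum_range_zero, zero_add]
  rw [add_assoc (3 / (4 * p 1)), ENNReal.ofReal_add (by positivity) (by positivity),
    ENNReal.ofReal_add (by positivity) (by positivity)]
  refine add_le_add (add_le_add (add_le_add ?_ ?_) ?_) ?_
  · rw [Nat.cast_zero, zero_add, ← div_div]
    exact mul_ofReal_inv_le_of_le (by norm_num) thetaSqSum_one_le _
  · refine (mul_ofReal_inv_le_of_le (by positivity) (thetaSqSum_le (W := 2) le_rfl) _).trans ?_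
    refine ENNReal.ofReal_le_ofReal ?_
    field_simp
    norm_num
  · refine (mul_ofReal_inv_le_of_le (by positivity) (thetaSqSum_le (W := 3) (by norm_num)) _).trans
      ?_
    refine ENNReal.ofReal_le_ofReal ?_
    field_simp
    norm_num
  · rw [← ENNReal.tsum_mul_left]
    refine ENNReal.tsum_le_tsum fun n => ?_
    have hpn := hp (n + 4) (by omega)
    rw [show ((n + 3 : ℕ) : ℤ) + 1 = (n + 4 : ℕ) by push_cast; ring]
    refine (mul_ofReal_inv_le_of_le (by positivity) (thetaSqSum_le (W := n + 4) (by omega)) _).trans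
      ?_
    rw [← ENNReal.ofReal_ofNat 288, ← ENNReal.ofReal_mul (by norm_num)]
    refine ENNReal.ofReal_le_ofReal ?_
    rw [mul_one_div, div_div]
    push_cast
    gcongr <;> linarith

lemma tsum_ofReal_one_div_pow_three_mul_ne_top {p : ℕ → ℝ} (hp : ∀ n : ℕ, 1 ≤ n → 0 < p n)
    (hs : Summable fun n : ℕ => 1 / ((n : ℝ) ^ 3 * p n)) :
    ∑' n : ℕ, ENNReal.ofReal (1 / ((n + 1) ^ 3 * p (n + 4))) ≠ ⊤ := by
  have hpn (n : ℕ) := hp (n + 4) (by omega)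
  have hle (n : ℕ) :
      1 / (((n : ℝ) + 1) ^ 3 * p (n + 4)) ≤ 64 * (1 / (((n + 4 : ℕ) : ℝ) ^ 3 * p (n + 4))) := by
    have := hpn n
    calc 1 / (((n : ℝ) + 1) ^ 3 * p (n + 4)) = 64 / ((4 * ((n : ℝ) + 1)) ^ 3 * p (n + 4)) := by
          field_simp; ring
      _ ≤ 64 * (1 / (((n + 4 : ℕ) : ℝ) ^ 3 * p (n + 4))) := by
          rw [mul_one_div]
          push_cast
          gcongr
          linarith
  rw [← ENNReal.ofReal_tsum_of_nonneg (fun n => by have := hpn n; positivity)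
    (Summable.of_nonneg_of_le (fun n => by have := hpn n; positivity) hle
      (((summable_nat_add_iff 4).2 hs).mul_left 64))]
  exact ENNReal.ofReal_ne_top

/-- the energy of the flow `θ` with respect to the conductances
`c(u,v) = p_{|v-u|}` (with `p_n > 0`) is bounded by
`3/(4p₁) + 1/(8p₂) + 32/(3p₂) + 32/(3p₃) + 288 ∑_{w≥4} 1/((w-3)³ p_w)`;
in particular, it is finite whenever `∑_{n≥1} 1/(n³ pₙ) < ∞`. -/
theorem theta_energy_bound (p : ℕ → ℝ) (hp : ∀ n : ℕ, 1 ≤ n → 0 < p n) :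
    ((1 : ENNReal) / 2 *
        ∑' uv : ℤ × ℤ,
          (if uv.1 ≠ uv.2 then
            ENNReal.ofReal (theta uv.1 uv.2 ^ 2 / p (uv.2 - uv.1).natAbs) else 0)
      ≤ ENNReal.ofReal (3 / (4 * p 1) + 1 / (8 * p 2) + 32 / (3 * p 2) + 32 / (3 * p 3))
        + 288 * ∑' w : ℕ,
            (if 4 ≤ w then ENNReal.ofReal (1 / (((w : ℝ) - 3) ^ 3 * p w)) else 0)) ∧
    (Summable (fun n : ℕ => 1 / ((n : ℝ) ^ 3 * p n)) →
      ∑' uv : ℤ × ℤ,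
          (if uv.1 ≠ uv.2 then
            ENNReal.ofReal (theta uv.1 uv.2 ^ 2 / p (uv.2 - uv.1).natAbs) else 0) < ⊤) := by
  have htail : ∑' w : ℕ, (if 4 ≤ w then ENNReal.ofReal (1 / (((w : ℝ) - 3) ^ 3 * p w)) else 0)
      = ∑' n : ℕ, ENNReal.ofReal (1 / ((n + 1) ^ 3 * p (n + 4))) := by
    rw [← ENNReal.summable.sum_add_tsum_nat_add' (k := 4),
      sum_eq_zero fun i hi => if_neg (by rw [mem_range] at hi; omega), zero_add]
    refine tsum_congr fun n => ?_
    rw [if_pos (by omega)]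
    push_cast
    ring_nf
  change 1 / 2 * thetaEnergy p ≤ _ ∧ (_ → thetaEnergy p < ⊤)
  rw [htail, thetaEnergy_eq, ← mul_assoc, one_div,
    ENNReal.inv_mul_cancel two_ne_zero ENNReal.ofNat_ne_top, one_mul]
  refine ⟨tsum_thetaSqSum_mul_le p hp, fun hs => ENNReal.mul_lt_top (by simp) ?_⟩
  exact (tsum_thetaSqSum_mul_le p hp).trans_lt <|
    ENNReal.add_lt_top.2 ⟨ENNReal.ofReal_lt_top,
      ENNReal.mul_lt_top (by simp) (tsum_ofReal_one_div_pow_three_mul_ne_top hp hs).lt_top⟩
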